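/- Suppose a network m(x) = h_s(x_s) + γ_c·f_c(x_c) where h_s depends only on spurious coordinates. Then for a ReLU neuron in h_s with weight vector w supported on spurious coordinates (and output weight a), the population gradient of the logistic loss over D_λ with respect to any core coordinate j ∈ [c] is zero: E_{D_λ}[∇_{w_j} ℓ(m(x), y)] = a·E_{D_unif}[(1−φ(f_s(x_s)h_s(x_s)+γ_c))·χ_{[c]∖{j}}(x)·σ'(w_s^⊤x_s)] + a·E_{D_unif}[(1−φ(f_s(x_s)h_s(x_s)+γ_c))·f_s(x_s)·σ'(w_s^⊤x_s)·x_j] = 0, where f_c = χ_{[c]} is the full parity on core coordinates with c ≥ 2. -/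
import Mathlib


open scoped Classical

noncomputable section

/-- Boolean vectors of length `m`. -/
abbrev BVec (m : ℕ) := Fin m → Bool

/-- The hypercube split into core and spurious blocks. -/
abbrev Cube2 (c s : ℕ) := BVec c × BVec s

/-- The real value of a boolean bit: `true ↦ 1`, `false ↦ -1`. -/
def bval (b : Bool) : ℝ := if b then 1 else -1

/-- The full parity `χ_{[c]}` on the core block. -/
def corePar (c : ℕ) (v : BVec c) : ℝ := ∏ i, bval (v i)

/-- Uniform probability mass. -/
def pUnif2 (c s : ℕ) : Cube2 c s → ℝ := fun _ => ((2 : ℝ) ^ (c + s))⁻¹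

/-- `D_same`: uniform conditioned on `f_c(x_c) = f_s(x_s)`. -/
def pSame2 (c s : ℕ) (fs : BVec s → ℝ) : Cube2 c s → ℝ := fun x =>
  if corePar c x.1 = fs x.2 then
    pUnif2 c s x / (∑ y : Cube2 c s, if corePar c y.1 = fs y.2 then pUnif2 c s y else 0)
  else 0

/-- `D_diff`: uniform conditioned on `f_c(x_c) ≠ f_s(x_s)`. -/
def pDiff2 (c s : ℕ) (fs : BVec s → ℝ) : Cube2 c s → ℝ := fun x =>
  if corePar c x.1 ≠ fs x.2 then
    pUnif2 c s x / (∑ y : Cube2 c s, if corePar c y.1 ≠ fs y.2 then pUnif2 c s y else 0)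
  else 0

/-- `D_λ := λ·D_same + (1−λ)·D_diff`. -/
def pLam2 (c s : ℕ) (fs : BVec s → ℝ) (lam : ℝ) : Cube2 c s → ℝ :=
  fun x => lam * pSame2 c s fs x + (1 - lam) * pDiff2 c s fs x

/-- The sigmoid function. -/
def sigmoid (t : ℝ) : ℝ := (1 + Real.exp (-t))⁻¹

/-- Subgradient of the ReLU. -/
def reluDeriv (t : ℝ) : ℝ := if 0 < t then 1 else 0

lemma bval_not (b : Bool) : bval (!b) = -bval b := by cases b <;> simp [bval]
lemma bval_sq (b : Bool) : bval b * bval b = 1 := by cases b <;> simp [bval]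

lemma corePar_sq (c : ℕ) (v : BVec c) : corePar c v * corePar c v = 1 := by
  rw [corePar, ← Finset.prod_mul_distrib]
  simp [bval_sq]

lemma corePar_pm (c : ℕ) (v : BVec c) : corePar c v = 1 ∨ corePar c v = -1 :=
  mul_self_eq_one_iff.mp (corePar_sq c v)

lemma sum_prod_bval (c : ℕ) (T : Finset (Fin c)) (hT : T.Nonempty) :
    ∑ v : BVec c, ∏ i ∈ T, bval (v i) = 0 := by
  obtain ⟨k, hk⟩ := hT
  have hinv : Function.Involutive (fun v : BVec c => Function.update v k (!(v k))) := by
    intro v; funext i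
    by_cases h : i = k <;> simp [Function.update, h]
  set e := hinv.toPerm
  have hcomp := Equiv.sum_comp e (fun v : BVec c => ∏ i ∈ T, bval (v i))
  have hneg : ∀ v : BVec c, (∏ i ∈ T, bval ((e v) i)) = -∏ i ∈ T, bval (v i) := by
    intro v
    rw [← Finset.mul_prod_erase T _ hk, ← Finset.mul_prod_erase T (fun i => bval (v i)) hk]
    have h1 : (e v) k = !(v k) := by simp [e, Function.Involutive.toPerm, Function.update]
    have h2 : ∀ i ∈ T.erase k, bval ((e v) i) = bval (v i) := by
      intro i hi
      have : i ≠ k := Finset.ne_of_mem_erase hi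
      simp [e, Function.Involutive.toPerm, Function.update, this]
    rw [h1, bval_not, Finset.prod_congr rfl h2]
    ring
  have : ∑ v : BVec c, ∏ i ∈ T, bval (v i) = -∑ v : BVec c, ∏ i ∈ T, bval (v i) := by
    conv_lhs => rw [← hcomp]
    rw [Finset.sum_congr rfl fun v _ => hneg v, Finset.sum_neg_distrib]
  linarith

lemma sum_bval (c : ℕ) (hc : 1 ≤ c) (j : Fin c) : ∑ v : BVec c, bval (v j) = 0 := by
  have := sum_prod_bval c {j} ⟨j, Finset.mem_singleton_self j⟩
  simpa using this

lemma erase_nonempty (c : ℕ) (hc : 2 ≤ c) (j : Fin c) :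
    (Finset.univ.erase j : Finset (Fin c)).Nonempty := by
  rw [← Finset.card_pos, Finset.card_erase_of_mem (Finset.mem_univ j)]
  simp only [Finset.card_univ, Fintype.card_fin]
  omega

lemma sum_prod_erase (c : ℕ) (hc : 2 ≤ c) (j : Fin c) :
    ∑ v : BVec c, ∏ i ∈ Finset.univ.erase j, bval (v i) = 0 :=
  sum_prod_bval c _ (erase_nonempty c hc j)

lemma corePar_mul_bval (c : ℕ) (v : BVec c) (j : Fin c) :
    corePar c v * bval (v j) = ∏ i ∈ Finset.univ.erase j, bval (v i) := by
  rw [corePar, ← Finset.mul_prod_erase Finset.univ (fun i => bval (v i)) (Finset.mem_univ j)]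
  rw [mul_comm (bval (v j)), mul_assoc, bval_sq, mul_one]

lemma sum_if_eq (c : ℕ) (hc : 2 ≤ c) (j : Fin c) (ε : ℝ) (hε : ε = 1 ∨ ε = -1) :
    ∑ v : BVec c, (if corePar c v = ε then bval (v j) else 0) = 0 := by
  have key : ∀ v : BVec c, (if corePar c v = ε then bval (v j) else 0)
      = (1/2) * bval (v j) + (ε/2) * ∏ i ∈ Finset.univ.erase j, bval (v i) := by
    intro v
    rw [← corePar_mul_bval]
    rcases corePar_pm c v with h | h <;> rcases hε with h' | h' <;>
      rw [h, h'] <;> norm_num <;> ring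
  rw [Finset.sum_congr rfl fun v _ => key v, Finset.sum_add_distrib,
    ← Finset.mul_sum, ← Finset.mul_sum, sum_bval c (by omega) j, sum_prod_erase c hc j]
  ring

lemma sum_if_ne (c : ℕ) (hc : 2 ≤ c) (j : Fin c) (ε : ℝ) (hε : ε = 1 ∨ ε = -1) :
    ∑ v : BVec c, (if corePar c v ≠ ε then bval (v j) else 0) = 0 := by
  have key : ∀ v : BVec c, (if corePar c v ≠ ε then bval (v j) else 0)
      = bval (v j) - (if corePar c v = ε then bval (v j) else 0) := by
    intro v; by_cases h : corePar c v = ε <;> simp [h]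
  rw [Finset.sum_congr rfl fun v _ => key v, Finset.sum_sub_distrib,
    sum_bval c (by omega) j, sum_if_eq c hc j ε hε]
  ring


lemma neq_pm {x y : ℝ} (hx : x = 1 ∨ x = -1) (hy : y = 1 ∨ y = -1) (h : x ≠ y) : x = -y := by
  rcases hx with h1 | h1 <;> rcases hy with h2 | h2 <;> simp_all <;> norm_num

/-- For the model `m(x) = h_s(x_s) + γ_c·f_c(x_c)` with `f_c = χ_{[c]}` the core parity
(`c ≥ 2`), the population gradient over `D_λ` of the logistic loss `ℓ(ŷ,y) = −2·log φ(y·ŷ)`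
with respect to a core coordinate `j ∈ [c]` of a spurious neuron `a·σ(w_s^⊤x_s)` equals
`a·E_unif[(1−φ(f_s h_s + γ_c))·χ_{[c]∖{j}}·σ'(w_s^⊤x_s)]
  + a·E_unif[(1−φ(f_s h_s + γ_c))·f_s·σ'(w_s^⊤x_s)·x_j]`, which is zero. -/
theorem spurious_neuron_core_grad_zero (c s : ℕ) (hc : 2 ≤ c)
    (fs : BVec s → ℝ) (hfs : ∀ v, fs v = 1 ∨ fs v = -1)
    (hpos_same : 0 < ∑ y : Cube2 c s, if corePar c y.1 = fs y.2 then pUnif2 c s y else 0)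
    (hpos_diff : 0 < ∑ y : Cube2 c s, if corePar c y.1 ≠ fs y.2 then pUnif2 c s y else 0)
    (lam : ℝ) (hlam₁ : 1 / 2 ≤ lam) (hlam₂ : lam ≤ 1)
    (hs : BVec s → ℝ) (gc a : ℝ) (ws : Fin s → ℝ) (j : Fin c) :
    (∑ x : Cube2 c s,
        pLam2 c s fs lam x *
          (-(2 : ℝ) * corePar c x.1 *
            (1 - sigmoid (corePar c x.1 * (hs x.2 + gc * corePar c x.1))) * a *
            reluDeriv (∑ i, ws i * bval (x.2 i)) * bval (x.1 j)))
      = a * (∑ x : Cube2 c s,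
            pUnif2 c s x *
              ((1 - sigmoid (fs x.2 * hs x.2 + gc)) *
                (∏ i ∈ Finset.univ.erase j, bval (x.1 i)) *
                reluDeriv (∑ i, ws i * bval (x.2 i))))
        + a * (∑ x : Cube2 c s,
            pUnif2 c s x *
              ((1 - sigmoid (fs x.2 * hs x.2 + gc)) * fs x.2 *
                reluDeriv (∑ i, ws i * bval (x.2 i)) * bval (x.1 j))) ∧
    a * (∑ x : Cube2 c s,
          pUnif2 c s x *
            ((1 - sigmoid (fs x.2 * hs x.2 + gc)) *
              (∏ i ∈ Finset.univ.erase j, bval (x.1 i)) *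
              reluDeriv (∑ i, ws i * bval (x.2 i))))
      + a * (∑ x : Cube2 c s,
          pUnif2 c s x *
            ((1 - sigmoid (fs x.2 * hs x.2 + gc)) * fs x.2 *
              reluDeriv (∑ i, ws i * bval (x.2 i)) * bval (x.1 j))) = 0 := by
  set Zs := ∑ y : Cube2 c s, if corePar c y.1 = fs y.2 then pUnif2 c s y else 0 with hZs
  set Zd := ∑ y : Cube2 c s, if corePar c y.1 ≠ fs y.2 then pUnif2 c s y else 0 with hZd
  -- the two uniform expectations vanish
  have hR1 : (∑ x : Cube2 c s,
      pUnif2 c s x *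
        ((1 - sigmoid (fs x.2 * hs x.2 + gc)) *
          (∏ i ∈ Finset.univ.erase j, bval (x.1 i)) *
          reluDeriv (∑ i, ws i * bval (x.2 i)))) = 0 := by
    rw [Fintype.sum_prod_type]
    have key : ∀ v : BVec c, (∑ u : BVec s,
        pUnif2 c s (v, u) *
          ((1 - sigmoid (fs u * hs u + gc)) *
            (∏ i ∈ Finset.univ.erase j, bval (v i)) *
            reluDeriv (∑ i, ws i * bval (u i))))
        = (∏ i ∈ Finset.univ.erase j, bval (v i)) *
          ∑ u : BVec s, ((2 : ℝ) ^ (c + s))⁻¹ *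
            ((1 - sigmoid (fs u * hs u + gc)) * reluDeriv (∑ i, ws i * bval (u i))) := by
      intro v
      rw [Finset.mul_sum]
      refine Finset.sum_congr rfl fun u _ => ?_
      simp only [pUnif2]; ring
    rw [Finset.sum_congr rfl fun v _ => key v, ← Finset.sum_mul,
      sum_prod_erase c hc j, zero_mul]
  have hR2 : (∑ x : Cube2 c s,
      pUnif2 c s x *
        ((1 - sigmoid (fs x.2 * hs x.2 + gc)) * fs x.2 *
          reluDeriv (∑ i, ws i * bval (x.2 i)) * bval (x.1 j))) = 0 := by
    rw [Fintype.sum_prod_type]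
    have key : ∀ v : BVec c, (∑ u : BVec s,
        pUnif2 c s (v, u) *
          ((1 - sigmoid (fs u * hs u + gc)) * fs u *
            reluDeriv (∑ i, ws i * bval (u i)) * bval (v j)))
        = bval (v j) *
          ∑ u : BVec s, ((2 : ℝ) ^ (c + s))⁻¹ *
            ((1 - sigmoid (fs u * hs u + gc)) * fs u * reluDeriv (∑ i, ws i * bval (u i))) := by
      intro v
      rw [Finset.mul_sum]
      refine Finset.sum_congr rfl fun u _ => ?_
      simp only [pUnif2]; ring
    rw [Finset.sum_congr rfl fun v _ => key v, ← Finset.sum_mul,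
      sum_bval c (by omega) j, zero_mul]
  -- the LHS vanishes as well
  have hSame : (∑ x : Cube2 c s,
      pSame2 c s fs x *
        (-(2 : ℝ) * corePar c x.1 *
          (1 - sigmoid (corePar c x.1 * (hs x.2 + gc * corePar c x.1))) * a *
          reluDeriv (∑ i, ws i * bval (x.2 i)) * bval (x.1 j))) = 0 := by
    rw [Fintype.sum_prod_type, Finset.sum_comm]
    refine Finset.sum_eq_zero fun u _ => ?_
    have hfs2 : fs u * fs u = 1 := by rcases hfs u with h | h <;> rw [h] <;> norm_num
    have key : ∀ v : BVec c, pSame2 c s fs (v, u) *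
        (-(2 : ℝ) * corePar c v *
          (1 - sigmoid (corePar c v * (hs u + gc * corePar c v))) * a *
          reluDeriv (∑ i, ws i * bval (u i)) * bval (v j))
        = (((2 : ℝ) ^ (c + s))⁻¹ / Zs *
            (-(2 : ℝ) * fs u * (1 - sigmoid (fs u * hs u + gc)) * a *
              reluDeriv (∑ i, ws i * bval (u i)))) *
          (if corePar c v = fs u then bval (v j) else 0) := by
      intro v
      simp only [pSame2]
      rw [← hZs]
      by_cases h : corePar c v = fs u
      · rw [if_pos h, if_pos h]
        have harg : corePar c v * (hs u + gc * corePar c v) = fs u * hs u + gc := by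
          rw [h]; linear_combination gc * hfs2
        rw [harg, h]; simp only [pUnif2]; ring
      · rw [if_neg h, if_neg h]; ring
    rw [Finset.sum_congr rfl fun v _ => key v, ← Finset.mul_sum,
      sum_if_eq c hc j (fs u) (hfs u), mul_zero]
  have hDiff : (∑ x : Cube2 c s,
      pDiff2 c s fs x *
        (-(2 : ℝ) * corePar c x.1 *
          (1 - sigmoid (corePar c x.1 * (hs x.2 + gc * corePar c x.1))) * a *
          reluDeriv (∑ i, ws i * bval (x.2 i)) * bval (x.1 j))) = 0 := by
    rw [Fintype.sum_prod_type, Finset.sum_comm]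
    refine Finset.sum_eq_zero fun u _ => ?_
    have hfs2 : fs u * fs u = 1 := by rcases hfs u with h | h <;> rw [h] <;> norm_num
    have key : ∀ v : BVec c, pDiff2 c s fs (v, u) *
        (-(2 : ℝ) * corePar c v *
          (1 - sigmoid (corePar c v * (hs u + gc * corePar c v))) * a *
          reluDeriv (∑ i, ws i * bval (u i)) * bval (v j))
        = (((2 : ℝ) ^ (c + s))⁻¹ / Zd *
            ((2 : ℝ) * fs u * (1 - sigmoid (-(fs u * hs u) + gc)) * a *
              reluDeriv (∑ i, ws i * bval (u i)))) *
          (if corePar c v ≠ fs u then bval (v j) else 0) := by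
      intro v
      simp only [pDiff2]
      rw [← hZd]
      by_cases h : corePar c v ≠ fs u
      · rw [if_pos h, if_pos h]
        have h' : corePar c v = -(fs u) := neq_pm (corePar_pm c v) (hfs u) h
        have harg : corePar c v * (hs u + gc * corePar c v) = -(fs u * hs u) + gc := by
          rw [h']; linear_combination gc * hfs2
        rw [harg, h']; simp only [pUnif2]; ring
      · rw [if_neg h, if_neg h]; ring
    rw [Finset.sum_congr rfl fun v _ => key v, ← Finset.mul_sum,
      sum_if_ne c hc j (fs u) (hfs u), mul_zero]
  have hL : (∑ x : Cube2 c s,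
      pLam2 c s fs lam x *
        (-(2 : ℝ) * corePar c x.1 *
          (1 - sigmoid (corePar c x.1 * (hs x.2 + gc * corePar c x.1))) * a *
          reluDeriv (∑ i, ws i * bval (x.2 i)) * bval (x.1 j))) = 0 := by
    have expand : ∀ x : Cube2 c s, pLam2 c s fs lam x *
        (-(2 : ℝ) * corePar c x.1 *
          (1 - sigmoid (corePar c x.1 * (hs x.2 + gc * corePar c x.1))) * a *
          reluDeriv (∑ i, ws i * bval (x.2 i)) * bval (x.1 j))
        = lam * (pSame2 c s fs x *
            (-(2 : ℝ) * corePar c x.1 *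
              (1 - sigmoid (corePar c x.1 * (hs x.2 + gc * corePar c x.1))) * a *
              reluDeriv (∑ i, ws i * bval (x.2 i)) * bval (x.1 j)))
          + (1 - lam) * (pDiff2 c s fs x *
            (-(2 : ℝ) * corePar c x.1 *
              (1 - sigmoid (corePar c x.1 * (hs x.2 + gc * corePar c x.1))) * a *
              reluDeriv (∑ i, ws i * bval (x.2 i)) * bval (x.1 j))) := by
      intro x; simp only [pLam2]; ring
    rw [Finset.sum_congr rfl fun x _ => expand x, Finset.sum_add_distrib,
      ← Finset.mul_sum, ← Finset.mul_sum, hSame, hDiff]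
    ring
  exact ⟨by rw [hL, hR1, hR2]; ring, by rw [hR1, hR2]; ring⟩
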